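/- Let L ⊴ G and φ ∈ Irr(L) be invariant in G. If h ∈ G and χ is a ℂ-linear combination of characters in Irr(G | φ) with χ(h) ≠ 0, then h is φ-good, i.e. ⟨c, h⟩_φ = 1 for every c ∈ G with [c,h] ∈ L and Lc ∈ C_{G/L}(Lh). -/

import Mathlib

open MonoidAlgebra Finset
open scoped Classical

noncomputable section

namespace CF

variable {G : Type} [Group G] [Fintype G]

/-- A group element viewed in the complex group algebra. -/
def ι (g : G) : MonoidAlgebra ℂ G := MonoidAlgebra.single g 1

/-- The central idempotent of `ℂL` attached to an (irreducible) character `φ` of the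
subgroup `L`, viewed inside the group algebra `ℂG`. -/
def eIdem (L : Subgroup G) (φ : ↥L → ℂ) : MonoidAlgebra ℂ G :=
  (φ 1 / (Fintype.card L : ℂ)) • ∑ l : L, MonoidAlgebra.single (l : G) (φ l⁻¹)

/-- `a` is supported on the subgroup `L`. -/
def SuppIn (L : Subgroup G) (a : MonoidAlgebra ℂ G) : Prop := ∀ g : G, g ∉ L → a.coeff g = 0

/-- `a` lies in the corner `e_φ ℂG e_φ` determined by the idempotent `e_φ`. -/
def InCorner (L : Subgroup G) (φ : ↥L → ℂ) (a : MonoidAlgebra ℂ G) : Prop :=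
  a * eIdem L φ = a ∧ eIdem L φ * a = a

/-- `c` is a unit of `ℂ L e_φ` (with inverse `c'`) inducing on `ℂ L e_φ` the
conjugation action of the element `x`. -/
def Induces (L : Subgroup G) (φ : ↥L → ℂ) (x : G) (c c' : MonoidAlgebra ℂ G) : Prop :=
  SuppIn L c ∧ SuppIn L c' ∧ InCorner L φ c ∧ InCorner L φ c' ∧
  c * c' = eIdem L φ ∧ c' * c = eIdem L φ ∧
  ∀ a, SuppIn L a → InCorner L φ a → ι x⁻¹ * a * ι x = c' * a * c

/-- The Isaacs–Dade scalar `⟨x,y⟩_φ = z`, defined by `⟨x,y⟩_φ e_φ = [x,y][c_y,c_x]`. -/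
def DadeScalar (L : Subgroup G) (φ : ↥L → ℂ) (x y : G) (z : ℂ) : Prop :=
  ∃ cx cx' cy cy', Induces L φ x cx cx' ∧ Induces L φ y cy cy' ∧
    ι (x⁻¹ * y⁻¹ * x * y) * (cy' * cx' * cy * cx) = z • eIdem L φ

/-- `χ` is the character of an irreducible complex representation of `H`. -/
def IsIrrChar (H : Type) [Group H] (χ : H → ℂ) : Prop :=
  ∃ V : FDRep ℂ H, CategoryTheory.Simple V ∧ χ = V.character

/-- The usual inner product of complex-valued class functions on a finite group. -/
def innerChar (H : Type) [Group H] [Fintype H] (α β : H → ℂ) : ℂ :=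
  (Fintype.card H : ℂ)⁻¹ * ∑ h : H, α h * (starRingEnd ℂ) (β h)

/-- `φ ∈ Irr L` is invariant under conjugation by all elements of `G`. -/
def Invariant (L : Subgroup G) [hN : L.Normal] (φ : ↥L → ℂ) : Prop :=
  ∀ (g : G) (l : ↥L), φ ⟨g⁻¹ * l * g, by simpa [mul_assoc] using hN.conj_mem l l.2 g⁻¹⟩ = φ l

end CF

open CF

/-- `g` is `φ`-good in `G`: `⟨c,g⟩_φ = 1` whenever `Lc` centralizes `Lg` in `G/L`. -/
def GoodElt {G : Type} [Group G] [Fintype G] (L : Subgroup G) (φ : ↥L → ℂ) (g : G) : Prop :=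
  ∀ c : G, c⁻¹ * g⁻¹ * c * g ∈ L → ∀ z : ℂ, DadeScalar L φ c g z → z = 1

/-!
Pick an irreducible constituent `ξ` of `χ` over `φ` with `ξ h ≠ 0`, afforded by `V`.
As `φ` is `G`-invariant, `e_φ` is central in `ℂG`, so by Schur it acts on `V` as a scalar;
this scalar is `1` because `ξ` lies over `φ` (the trace of `e_φ` on `V` is `φ 1 ⟨ξ_L, φ⟩ ≠ 0`).
Then the units `c_c`, `c_h` of `ℂLe_φ` act invertibly on `V`, and the defining relation of
`⟨c,h⟩_φ` says that conjugating `ρ h` by `ρ c ρ(c_c)⁻¹` gives `⟨c,h⟩_φ • ρ h`.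
Taking traces, `ξ h = ⟨c,h⟩_φ ξ h`.
-/

open Module

section

variable {K V : Type*} [Field K] [AddCommGroup V] [Module K V] [FiniteDimensional K V]

lemma Module.End.IsSemisimple.isInternal_eigenspace [IsAlgClosed K] {f : End K V}
    (hf : f.IsSemisimple) : DirectSum.IsInternal f.eigenspace :=
  DirectSum.isInternal_submodule_of_iSupIndep_of_iSup_eq_top f.eigenspaces_iSupIndep
    hf.iSup_eigenspace_eq_top

lemma LinearMap.trace_eq_sum_mul_finrank_of_isInternal {ι : Type*} {N : ι → Submodule K V}
    (h : DirectSum.IsInternal N) (hN : {i | N i ≠ ⊥}.Finite) {g : End K V} (c : ι → K)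
    (hg : ∀ i, ∀ v ∈ N i, g v = c i • v) :
    LinearMap.trace K V g = ∑ i ∈ hN.toFinset, c i * finrank K (N i) := by
  have hmaps : ∀ i, Set.MapsTo g (N i) (N i) := fun i v hv => by
    rw [SetLike.mem_coe, hg i v hv]; exact (N i).smul_mem (c i) hv
  rw [LinearMap.trace_eq_sum_trace_restrict' h hN hmaps]
  refine Finset.sum_congr rfl fun i _ => ?_
  have : g.restrict (hmaps i) = c i • (1 : End K (N i)) := by
    ext ⟨v, hv⟩
    exact hg i v hv
  rw [this, map_smul, LinearMap.trace_one, smul_eq_mul]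

end

lemma Module.End.trace_eq_conj_trace_of_pow_eq_one {V : Type*} [AddCommGroup V] [Module ℂ V]
    [FiniteDimensional ℂ V] {f g : End ℂ V} {n : ℕ} (hn : n ≠ 0) (hf : f ^ n = 1)
    (hgf : g * f = 1) : LinearMap.trace ℂ V g = starRingEnd ℂ (LinearMap.trace ℂ V f) := by
  have hss : f.IsSemisimple := by
    refine isSemisimple_of_squarefree_aeval_eq_zero
      (Polynomial.separable_X_pow_sub_C (1 : ℂ) (by exact_mod_cast hn) one_ne_zero).squarefree ?_
    simp [hf]
  have hint := hss.isInternal_eigenspace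
  have hN := Submodule.finite_ne_bot_of_iSupIndep hint.submodule_iSupIndep
  -- eigenvalues are roots of unity, so `g = f⁻¹` acts on `E_μ` by `μ⁻¹ = conj μ`
  have hg : ∀ μ : ℂ, ∀ v ∈ f.eigenspace μ, g v = starRingEnd ℂ μ • v := by
    intro μ v hv
    rcases eq_or_ne v 0 with rfl | hv0
    · simp
    have hfv : f v = μ • v := Module.End.mem_eigenspace_iff.mp hv
    have hμn : μ ^ n = 1 := by
      have := Module.End.HasEigenvector.pow_apply ⟨hv, hv0⟩ n
      rw [hf, Module.End.one_apply] at this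
      exact smul_left_injective ℂ hv0 (by simpa using this.symm)
    have hμ : ‖μ‖ = 1 := Complex.norm_eq_one_of_pow_eq_one hμn hn
    rw [← Complex.inv_eq_conj hμ]
    have hμ0 : μ ≠ 0 := by rintro rfl; simp at hμ
    calc g v = g (μ⁻¹ • f v) := by rw [hfv, inv_smul_smul₀ hμ0]
      _ = μ⁻¹ • v := by rw [map_smul, ← Module.End.mul_apply, hgf, Module.End.one_apply]
  rw [LinearMap.trace_eq_sum_mul_finrank_of_isInternal hint hN _ hg,
    LinearMap.trace_eq_sum_mul_finrank_of_isInternal hint hN id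
      (fun μ v hv => Module.End.mem_eigenspace_iff.mp hv)]
  simp [map_sum]

lemma FDRep.char_inv {H : Type*} [Group H] [Finite H] (V : FDRep ℂ H) (g : H) :
    V.character g⁻¹ = starRingEnd ℂ (V.character g) :=
  Module.End.trace_eq_conj_trace_of_pow_eq_one (orderOf_pos g).ne'
    (by rw [← map_pow, pow_orderOf_eq_one, map_one])
    (by rw [← map_mul, inv_mul_cancel, map_one])

lemma FDRep.char_eq_zero_of_char_one_eq_zero {k H : Type*} [Field k] [CharZero k] [Group H]
    (V : FDRep k H)
    (h : V.character 1 = 0) : V.character = 0 := by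
  have : Subsingleton V := Module.finrank_zero_iff.mp (by simpa [FDRep.char_one] using h)
  ext g
  simp [FDRep.character, Subsingleton.elim (V.ρ g) 0]

lemma FDRep.exists_eq_smul_one_of_commute {k H : Type*} [Field k] [IsAlgClosed k] [Group H]
    (V : FDRep k H) [CategoryTheory.Simple V] (T : Module.End k V)
    (hT : ∀ g : H, Commute T (V.ρ g)) : ∃ μ : k, T = μ • 1 := by
  let θ : V ⟶ V :=
    ⟨FGModuleCat.ofHom T, fun g => by ext v; exact LinearMap.congr_fun (hT g) v⟩
  obtain ⟨μ, hμ⟩ := CategoryTheory.endomorphism_simple_eq_smul_id k θ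
  exact ⟨μ, (congrArg (fun f : V ⟶ V => f.hom.hom.hom) hμ).symm⟩

lemma exists_mem_apply_ne_zero_of_mem_span {ι R M : Type*} [Semiring R] [AddCommMonoid M]
    [Module R M] {S : Set (ι → M)} {f : ι → M} (hf : f ∈ Submodule.span R S) {i : ι}
    (hi : f i ≠ 0) : ∃ g ∈ S, g i ≠ 0 := by
  by_contra! hS
  have : Submodule.span R S ≤ LinearMap.ker (LinearMap.proj (R := R) (φ := fun _ : ι => M) i) :=
    Submodule.span_le.mpr fun g hg => hS g hg
  exact hi (this hf)

lemma conj_eq_smul_of_commutator_eq_smul {K R : Type*} [CommSemiring K] [Semiring R]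
    [Algebra K R] {P P' Q Q' B B' C C' : R} {z : K} (hPP' : P * P' = 1) (hQQ' : Q * Q' = 1)
    (hcomm : P' * Q' * P * Q * (C' * B' * C * B) = z • 1) (hconj : Q' * B' * Q = C' * B' * C) :
    P * B' * Q * (B * P') = z • Q := by
  have cancelP : ∀ X : R, P * (P' * X) = X := fun X => by rw [← mul_assoc, hPP', one_mul]
  have cancelQ : ∀ X : R, Q * (Q' * X) = X := fun X => by rw [← mul_assoc, hQQ', one_mul]
  have h : P' * Q' * (P * B' * Q * B) = z • 1 := by
    rw [← hcomm, ← hconj]; simp only [mul_assoc, cancelQ]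
  calc P * B' * Q * (B * P') = Q * (P * (P' * Q' * (P * B' * Q * B))) * P' := by
        simp only [mul_assoc, cancelP, cancelQ]
    _ = z • Q := by rw [h, mul_smul_one, mul_smul_comm, smul_mul_assoc, mul_assoc, hPP', mul_one]

namespace CF

variable {G : Type} [Group G] [Fintype G] {L : Subgroup G} {φ : ↥L → ℂ}

lemma commute_ι_eIdem [L.Normal] (hφ : Invariant L φ) (g : G) : Commute (ι g) (eIdem L φ) := by
  simp only [Commute, SemiconjBy, ι, eIdem, mul_smul_comm, smul_mul_assoc, Finset.mul_sum,
    Finset.sum_mul, single_mul_single, one_mul, mul_one]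
  congr 1
  refine Fintype.sum_equiv (MulAut.conjNormal g).toEquiv _ _ fun l => ?_
  have hmul : ((MulAut.conjNormal g).toEquiv l : G) * g = g * l := by simp
  rw [hmul, ← hφ g ((MulAut.conjNormal g).toEquiv l)⁻¹]
  congr 2
  ext
  simp

lemma trace_asAlgebraHom_eIdem (hφ : IsIrrChar L φ) (V : FDRep ℂ G) :
    LinearMap.trace ℂ V (Representation.asAlgebraHom V.ρ (eIdem L φ)) =
      φ 1 * innerChar L (fun l => V.character l) φ := by
  obtain ⟨W, -, rfl⟩ := hφ
  simp only [eIdem, innerChar, map_smul, map_sum, Representation.asAlgebraHom_single,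
    smul_eq_mul, FDRep.char_inv]
  rw [div_eq_mul_inv, mul_assoc]
  exact congrArg _ (congrArg _ (Finset.sum_congr rfl fun l _ => mul_comm _ _))

lemma trace_asAlgebraHom_eIdem_ne_zero (hφ : IsIrrChar L φ) {V : FDRep ℂ G}
    (hV : innerChar L (fun l => V.character l) φ ≠ 0) :
    LinearMap.trace ℂ V (Representation.asAlgebraHom V.ρ (eIdem L φ)) ≠ 0 := by
  rw [trace_asAlgebraHom_eIdem hφ]
  refine mul_ne_zero ?_ hV
  obtain ⟨W, -, rfl⟩ := hφ
  intro h
  apply hV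
  simp [innerChar, W.char_eq_zero_of_char_one_eq_zero h]

open Representation in
lemma asAlgebraHom_eIdem_eq_one [L.Normal] (hφ : Invariant L φ) (V : FDRep ℂ G)
    [CategoryTheory.Simple V] {c c' : MonoidAlgebra ℂ G} (hcc' : c * c' = eIdem L φ)
    (hc : eIdem L φ * c = c)
    (htr : LinearMap.trace ℂ V (asAlgebraHom V.ρ (eIdem L φ)) ≠ 0) :
    asAlgebraHom V.ρ (eIdem L φ) = 1 := by
  set π := asAlgebraHom V.ρ
  obtain ⟨μ, hμ⟩ := V.exists_eq_smul_one_of_commute (π (eIdem L φ)) fun g => by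
    simpa [π, ι] using ((commute_ι_eIdem hφ g).map π).symm
  have hc0 : π c ≠ 0 := fun h => htr (by rw [← hcc', map_mul, h, zero_mul, map_zero])
  have hμc : (μ - 1) • π c = 0 := by
    rw [sub_smul, one_smul, ← smul_one_mul, ← hμ, ← map_mul, hc, sub_self]
  have hμ1 : μ = 1 := sub_eq_zero.mp ((smul_eq_zero.mp hμc).resolve_right hc0)
  rw [hμ, hμ1, one_smul]

open Representation in
lemma mul_character_eq_of_induces (V : FDRep ℂ G) (he : asAlgebraHom V.ρ (eIdem L φ) = 1)
    {x y : G} {cx cx' cy cy' : MonoidAlgebra ℂ G} (hx : Induces L φ x cx cx')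
    (hy : Induces L φ y cy cy') {z : ℂ}
    (hz : ι (x⁻¹ * y⁻¹ * x * y) * (cy' * cx' * cy * cx) = z • eIdem L φ) :
    z * V.character y = V.character y := by
  obtain ⟨-, hsupp', -, hcorner', hxx', -, -⟩ := hx
  obtain ⟨-, -, -, -, -, -, hy_conj⟩ := hy
  set π := asAlgebraHom V.ρ
  have hπι : ∀ g, π (ι g) = V.ρ g := asAlgebraHom_single_one V.ρ
  have hcomm :
      V.ρ x⁻¹ * V.ρ y⁻¹ * V.ρ x * V.ρ y * (π cy' * π cx' * π cy * π cx) = z • 1 := by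
    simpa only [map_mul, map_smul, he, hπι] using congrArg π hz
  have hconj : V.ρ y⁻¹ * π cx' * V.ρ y = π cy' * π cx' * π cy := by
    simpa only [map_mul, hπι] using congrArg π (hy_conj cx' hsupp' hcorner')
  have hinv : π cx * V.ρ x⁻¹ * (V.ρ x * π cx') = 1 := by
    rw [mul_assoc, ← mul_assoc (V.ρ x⁻¹), ← map_mul, inv_mul_cancel, map_one, one_mul,
      ← map_mul, hxx', he]
  have key := conj_eq_smul_of_commutator_eq_smul (by rw [← map_mul, mul_inv_cancel, map_one])
    (by rw [← map_mul, mul_inv_cancel, map_one]) hcomm hconj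
  calc z * V.character y = LinearMap.trace ℂ V (z • V.ρ y) := by rw [map_smul, smul_eq_mul]; rfl
    _ = LinearMap.trace ℂ V (π cx * V.ρ x⁻¹ * (V.ρ x * π cx') * V.ρ y) := by
      rw [← key, LinearMap.trace_mul_cycle, mul_assoc]
    _ = V.character y := by rw [hinv, one_mul]; rfl

end CF

/-- Lemma 2.3 of Ladisch.  If `χ` is a complex linear combination of
irreducible characters of `G` lying over `φ` and `χ(h) ≠ 0`, then `h` is `φ`-good. -/
theorem stmt2 {G : Type} [Group G] [Fintype G] (L : Subgroup G) [L.Normal]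
    (φ : ↥L → ℂ) (hφirr : IsIrrChar ↥L φ) (hφinv : Invariant L φ)
    (χ : G → ℂ)
    (hχ : χ ∈ Submodule.span ℂ
      {ξ : G → ℂ | IsIrrChar G ξ ∧ innerChar ↥L (fun l => ξ (l : G)) φ ≠ 0})
    (h : G) (hne : χ h ≠ 0) :
    GoodElt L φ h := by
  intro c _ z ⟨cc, cc', ch, ch', hc, hh, hz⟩
  obtain ⟨_, ⟨⟨V, hV, rfl⟩, hover⟩, hVh⟩ := exists_mem_apply_ne_zero_of_mem_span hχ hne
  have hcc' : cc * cc' = eIdem L φ := hc.2.2.2.2.1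
  have hecc : eIdem L φ * cc = cc := hc.2.2.1.2
  have he := asAlgebraHom_eIdem_eq_one hφinv V hcc' hecc
    (trace_asAlgebraHom_eIdem_ne_zero hφirr hover)
  have hzV := mul_character_eq_of_induces V he hc hh hz
  exact mul_right_cancel₀ hVh (hzV.trans (one_mul _).symm)
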